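/- arXiv:2507.01425 — 2 statements merged into one kernel-verified Lean document; each statement's English description precedes it below -/
import Mathlib

section
/- Let D₁, …, Dₙ be pairwise non-isomorphic finite connected racks and λ₁, …, λₙ integers. If for every finite connected rack C the equality λ₁·|Mor(C, D₁)| + ⋯ + λₙ·|Mor(C, Dₙ)| = 0 holds, where Mor(C, D) denotes the (finite) set of rack morphisms C → D, then λ₁ = ⋯ = λₙ = 0. In other words, the mark functions C ↦ |Mor(C, −)| separate integral linear combinations of isomorphism classes of finite connected racks. -/
open Quandles

/-- A subrack of a rack `R`: a subset `S` with `ℓ_s(S) = S` for all `s ∈ S`. -/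
def IsSubrack {R : Type*} [Rack R] (S : Set R) : Prop :=
  ∀ s ∈ S, (fun b => s ◃ b) '' S = S

/-- The inner automorphism group of a rack: the subgroup of permutations generated by
the left multiplications. -/
def Inn (R : Type*) [Rack R] : Subgroup (Equiv.Perm R) :=
  Subgroup.closure (Set.range (Rack.act' : R → R ≃ R))

/-- A rack is connected if its inner automorphism group acts transitively on it,
i.e. there is exactly one orbit. -/
def IsConnectedRack (R : Type*) [Rack R] : Prop :=
  Nonempty R ∧ ∀ x y : R, ∃ g ∈ Inn R, g x = y

/-- A decomposition of a rack into two disjoint nonempty subracks. -/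
structure IsDecomposition (R : Type*) [Rack R] (S T : Set R) : Prop where
  subrack_left : IsSubrack S
  subrack_right : IsSubrack T
  nonempty_left : S.Nonempty
  nonempty_right : T.Nonempty
  disjoint : Disjoint S T
  union : S ∪ T = Set.univ

/-- Two shelves (racks, quandles) are isomorphic if there is a structure-preserving
bijection between them. -/
def RackIsomorphic (A B : Type*) [Shelf A] [Shelf B] : Prop :=
  ∃ e : A ≃ B, ∀ x y : A, e (x ◃ y) = e x ◃ e y

/-- The permutation rack on a set `R` given by a permutation `π`: `a ◃ b = π b`. -/
def permRack {R : Type*} (π : Equiv.Perm R) : Rack R where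
  act _ b := π b
  self_distrib := rfl
  invAct _ b := π.symm b
  left_inv _ b := π.symm_apply_apply b
  right_inv _ b := π.apply_symm_apply b

/-- The product of two racks, with componentwise operation. -/
instance prodRack {A B : Type*} [Rack A] [Rack B] : Rack (A × B) where
  act x y := (x.1 ◃ y.1, x.2 ◃ y.2)
  self_distrib := by
    intro x y z
    dsimp only
    rw [Shelf.self_distrib (x := x.1), Shelf.self_distrib (x := x.2)]
  invAct x y := (x.1 ◃⁻¹ y.1, x.2 ◃⁻¹ y.2)
  left_inv x y := by
    dsimp only
    rw [Rack.left_inv x.1 y.1, Rack.left_inv x.2 y.2]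
  right_inv x y := by
    dsimp only
    rw [Rack.right_inv x.1 y.1, Rack.right_inv x.2 y.2]

/-- A subrack, with its induced rack structure. -/
def Subrack.rack {R : Type*} [Rack R] (S : Set R) (hS : IsSubrack S) : Rack S where
  act x y := ⟨x.1 ◃ y.1, by
    have h := hS x.1 x.2
    exact (Set.ext_iff.mp h (x.1 ◃ y.1)).mp ⟨y.1, y.2, rfl⟩⟩
  self_distrib := by
    intro x y z
    exact Subtype.ext Shelf.self_distrib
  invAct x y := ⟨x.1 ◃⁻¹ y.1, by
    have h := hS x.1 x.2
    have hy : (y : R) ∈ (fun b => x.1 ◃ b) '' S := (Set.ext_iff.mp h y.1).mpr y.2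
    obtain ⟨u, hu, hequ⟩ := hy
    have : x.1 ◃⁻¹ (y : R) = u := by
      rw [← hequ]; exact Rack.left_inv x.1 u
    rw [this]; exact hu⟩
  left_inv x y := Subtype.ext (Rack.left_inv x.1 y.1)
  right_inv x y := Subtype.ext (Rack.right_inv x.1 y.1)

/-!
Splitting a morphism through its image gives `|Mor(C, D)| = ∑ |Epi(C, S)|` over the subracks `S`
of `D`, so the hypothesis reads `∑ w(q) |Epi(C, q)| = 0`, summed over the subracks `q` of all the
`Dᵢ`, with `w(q) = λᵢ` for `q ⊆ Dᵢ`. Surjections preserve connectedness and do not increase the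
size, and a surjection between racks of equal size is an isomorphism. So `|Epi(q, q')|`, viewed on
isomorphism classes, is triangular with nonzero diagonal, and induction on `|q|` shows that the
total weight of every class of connected subracks vanishes. For `i` with `λᵢ ≠ 0` and `|Dᵢ|`
maximal, `Dᵢ` itself is the only member of its class with nonzero weight, hence `λᵢ = 0`.
-/

open Function

universe u

namespace RackIsomorphic

variable {A B C : Type*} [Shelf A] [Shelf B] [Shelf C]

protected theorem refl (A : Type*) [Shelf A] : RackIsomorphic A A :=
  ⟨Equiv.refl A, fun _ _ => rfl⟩

protected theorem symm (h : RackIsomorphic A B) : RackIsomorphic B A := by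
  obtain ⟨e, he⟩ := h
  refine ⟨e.symm, fun x y => e.injective ?_⟩
  simp only [he, Equiv.apply_symm_apply]

protected theorem trans (h : RackIsomorphic A B) (h' : RackIsomorphic B C) :
    RackIsomorphic A C := by
  obtain ⟨e, he⟩ := h
  obtain ⟨e', he'⟩ := h'
  exact ⟨e.trans e', fun x y => by simp [he, he']⟩

theorem card_eq (h : RackIsomorphic A B) : Nat.card A = Nat.card B :=
  Nat.card_congr h.choose

theorem of_surjective_of_card_le [Finite A] (f : A →◃ B) (hf : Surjective f)
    (hcard : Nat.card A ≤ Nat.card B) : RackIsomorphic A B :=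
  ⟨Equiv.ofBijective f (hf.bijective_of_nat_card_le hcard), fun _ _ => f.map_act⟩

def setoid {κ : Type*} (R : κ → Type*) [∀ k, Shelf (R k)] : Setoid κ where
  r k k' := RackIsomorphic (R k) (R k')
  iseqv := ⟨fun k => .refl (R k), .symm, .trans⟩

end RackIsomorphic

def Subrack (E : Type*) [Rack E] : Type _ := {S : Set E // IsSubrack S}

namespace Subrack

variable {E : Type*} [Rack E]

instance : CoeSort (Subrack E) (Type _) := ⟨fun S => S.1⟩

instance (S : Subrack E) : Rack S := Subrack.rack S.1 S.2

instance [Finite E] : Finite (Subrack E) := inferInstanceAs (Finite {S : Set E // IsSubrack S})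

noncomputable instance [Finite E] : Fintype (Subrack E) := Fintype.ofFinite _

theorem isSubrack_univ : IsSubrack (Set.univ : Set E) := fun s _ => by
  rw [Set.image_univ]
  exact Set.range_eq_univ.mpr fun y => ⟨s ◃⁻¹ y, Rack.right_inv s y⟩

protected def univ (E : Type*) [Rack E] : Subrack E := ⟨Set.univ, isSubrack_univ⟩

theorem rackIsomorphic_univ : RackIsomorphic (Subrack.univ E) E :=
  ⟨Equiv.Set.univ E, fun _ _ => rfl⟩

theorem eq_univ_of_card_eq [Finite E] (S : Subrack E) (h : Nat.card S = Nat.card E) :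
    S = Subrack.univ E := by
  have hsurj := (Subtype.val_injective.bijective_of_nat_card_le h.ge).2
  exact Subtype.ext <| Set.eq_univ_of_forall fun x => by
    obtain ⟨⟨y, hy⟩, rfl⟩ := hsurj x
    exact hy

def incl (S : Subrack E) : S →◃ E := ⟨Subtype.val, rfl⟩

end Subrack

namespace ShelfHom

variable {C E : Type*} [Rack C] [Rack E]

theorem isSubrack_range (f : C →◃ E) : IsSubrack (Set.range f) := by
  rintro _ ⟨c, rfl⟩
  ext y
  constructor
  · rintro ⟨-, ⟨a, rfl⟩, rfl⟩
    exact ⟨c ◃ a, f.map_act⟩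
  · rintro ⟨w, rfl⟩
    exact ⟨f (c ◃⁻¹ w), ⟨c ◃⁻¹ w, rfl⟩, show f c ◃ f (c ◃⁻¹ w) = f w by
      rw [← f.map_act, Rack.right_inv]⟩

protected def range (f : C →◃ E) : Subrack E := ⟨Set.range f, f.isSubrack_range⟩

def rangeEqEquiv (S : Subrack E) :
    {f : C →◃ E // f.range = S} ≃ {g : C →◃ S // Surjective g} where
  toFun f :=
    have hf : Set.range f.1 = S.1 := congrArg Subtype.val f.2
    ⟨⟨fun x => ⟨f.1 x, hf ▸ ⟨x, rfl⟩⟩, Subtype.ext f.1.map_act⟩, by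
      rintro ⟨y, hy⟩
      obtain ⟨x, rfl⟩ := hf ▸ hy
      exact ⟨x, rfl⟩⟩
  invFun g := ⟨(Subrack.incl S).comp g.1, Subtype.ext <|
    show Set.range (Subtype.val ∘ g.1) = S.1 by
      rw [Set.range_comp, g.2.range_eq, Set.image_univ, Subtype.range_coe]⟩
  left_inv f := rfl
  right_inv g := rfl

end ShelfHom

noncomputable def surjCount (C E : Type*) [Shelf C] [Shelf E] : ℕ :=
  Nat.card {f : C →◃ E // Surjective f}

theorem exists_surjective_of_surjCount_ne_zero {C E : Type*} [Shelf C] [Shelf E]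
    (h : surjCount C E ≠ 0) : ∃ f : C →◃ E, Surjective f :=
  let ⟨f⟩ := (Nat.card_ne_zero.mp h).1
  ⟨f.1, f.2⟩

section Counting

variable {C E : Type*} [Rack C] [Rack E]

theorem card_shelfHom_eq_sum_surjCount [Finite C] [Finite E] :
    Nat.card (C →◃ E) = ∑ S : Subrack E, surjCount C S := by
  have : Finite (C →◃ E) := Finite.of_injective _ DFunLike.coe_injective
  rw [← Nat.card_congr (Equiv.sigmaFiberEquiv ShelfHom.range), Nat.card_sigma]
  exact Finset.sum_congr rfl fun S _ => Nat.card_congr (ShelfHom.rangeEqEquiv S)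

theorem surjCount_self_pos [Finite C] : 0 < surjCount C C :=
  have : Finite (C →◃ C) := Finite.of_injective _ DFunLike.coe_injective
  have : Nonempty {f : C →◃ C // Surjective f} := ⟨⟨ShelfHom.id C, surjective_id⟩⟩
  Nat.card_pos

theorem RackIsomorphic.surjCount_eq {A : Type*} [Rack A] (h : RackIsomorphic A E) :
    surjCount C A = surjCount C E := by
  obtain ⟨e, he⟩ := h
  let φ : A →◃ E := ⟨e, he _ _⟩
  let ψ : E →◃ A :=
    ⟨e.symm, fun {x y} => e.injective (by simp only [he, Equiv.apply_symm_apply])⟩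
  exact Nat.card_congr
    { toFun f := ⟨φ.comp f.1, e.surjective.comp f.2⟩
      invFun g := ⟨ψ.comp g.1, e.symm.surjective.comp g.2⟩
      left_inv f := Subtype.ext <| DFunLike.ext _ _ fun x => e.symm_apply_apply (f.1 x)
      right_inv g := Subtype.ext <| DFunLike.ext _ _ fun x => e.apply_symm_apply (g.1 x) }

end Counting

section Connected

variable {C E : Type*} [Rack C] [Rack E]

theorem ShelfHom.exists_mem_inn_comp_eq (f : C →◃ E) {g : Equiv.Perm C} (hg : g ∈ Inn C) :
    ∃ h ∈ Inn E, ∀ x, f (g x) = h (f x) := by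
  induction hg using Subgroup.closure_induction with
  | mem _ hx =>
    obtain ⟨a, rfl⟩ := hx
    exact ⟨Rack.act' (f a), Subgroup.subset_closure ⟨f a, rfl⟩, fun x => by
      simp only [Rack.act'_apply, f.map_act]⟩
  | one => exact ⟨1, one_mem _, fun _ => rfl⟩
  | mul _ _ _ _ ihx ihy =>
    obtain ⟨hx, hxm, hxe⟩ := ihx
    obtain ⟨hy, hym, hye⟩ := ihy
    exact ⟨hx * hy, mul_mem hxm hym, fun z => by simp only [Equiv.Perm.mul_apply, hye, hxe]⟩
  | inv g _ ih =>
    obtain ⟨h, hm, he⟩ := ih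
    refine ⟨h⁻¹, inv_mem hm, fun z => Equiv.Perm.eq_inv_iff_eq.mpr ?_⟩
    rw [← he, ← Equiv.Perm.mul_apply, mul_inv_cancel, Equiv.Perm.one_apply]

theorem IsConnectedRack.of_surjective (hC : IsConnectedRack C) (f : C →◃ E)
    (hf : Surjective f) : IsConnectedRack E := by
  refine ⟨hC.1.map f, fun x y => ?_⟩
  obtain ⟨a, rfl⟩ := hf x
  obtain ⟨b, rfl⟩ := hf y
  obtain ⟨g, hg, rfl⟩ := hC.2 a b
  obtain ⟨h, hm, he⟩ := f.exists_mem_inn_comp_eq hg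
  exact ⟨h, hm, (he a).symm⟩

theorem RackIsomorphic.isConnectedRack (h : RackIsomorphic C E) (hC : IsConnectedRack C) :
    IsConnectedRack E :=
  let ⟨e, he⟩ := h
  hC.of_surjective ⟨e, he _ _⟩ e.surjective

end Connected

theorem Finset.sum_mul_eq_classSum_mul {X R : Type*} [Fintype X] [NonUnitalNonAssocSemiring R]
    (s : Setoid X) [DecidableRel s.r] (f g : X → R) (x₀ : X)
    (hg : ∀ x y, x ≈ y → g x = g y)
    (hf : ∀ x, g x ≠ 0 → ¬ x ≈ x₀ → ∑ y with y ≈ x, f y = 0) :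
    ∑ x, f x * g x = (∑ x with x ≈ x₀, f x) * g x₀ := by
  have hclass : ∀ x, ∑ y with Quotient.mk s y = Quotient.mk s x, f y * g y =
      (∑ y with y ≈ x, f y) * g x := by
    intro x
    simp only [Quotient.eq, Finset.sum_mul]
    exact Finset.sum_congr rfl fun y hy => by rw [hg y x (Finset.mem_filter.mp hy).2]
  rw [← Finset.sum_fiberwise Finset.univ (Quotient.mk s), Fintype.sum_eq_single ⟦x₀⟧,
    hclass]
  intro c hc
  obtain ⟨x, rfl⟩ := Quotient.mk_surjective c
  rw [hclass]
  by_cases hgx : g x = 0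
  · rw [hgx, mul_zero]
  · rw [hf x hgx (fun h => hc (Quotient.sound h)), zero_mul]

section Marks

variable {ι : Type*} [Fintype ι] {D : ι → Type u} [∀ i, Rack (D i)] [∀ i, Finite (D i)]

abbrev subrackIsoSetoid (D : ι → Type u) [∀ i, Rack (D i)] : Setoid (Σ i, Subrack (D i)) :=
  RackIsomorphic.setoid fun q => q.2

open Classical in
/-- The weight `∑ w(q')` of the isomorphism class of `q`, in the notation of the header. -/
noncomputable def classWeight (lam : ι → ℤ) (q : Σ i, Subrack (D i)) : ℤ :=
  ∑ q' with (subrackIsoSetoid D).r q' q, lam q'.1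

theorem sum_mul_card_shelfHom_eq (lam : ι → ℤ) (C : Type*) [Rack C] [Finite C] :
    ∑ i, lam i * (Nat.card (C →◃ D i) : ℤ) =
      ∑ q : Σ i, Subrack (D i), lam q.1 * (surjCount C q.2 : ℤ) := by
  simp only [card_shelfHom_eq_sum_surjCount, Nat.cast_sum, Finset.mul_sum, Fintype.sum_sigma]

theorem classWeight_eq_zero (lam : ι → ℤ)
    (hmarks : ∀ (E : Type u) [Rack E] [Fintype E], IsConnectedRack E →
      ∑ i, lam i * (Nat.card (E →◃ D i) : ℤ) = 0)
    (q : Σ i, Subrack (D i)) (hq : IsConnectedRack q.2) : classWeight lam q = 0 := by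
  classical
  induction hn : Nat.card q.2 using Nat.strong_induction_on generalizing q with
  | _ n ih =>
    have : Fintype q.2 := Fintype.ofFinite _
    have hsum := sum_mul_card_shelfHom_eq (D := D) lam q.2
    rw [hmarks q.2 hq, Finset.sum_mul_eq_classSum_mul (subrackIsoSetoid D) _ _ q] at hsum
    · have hpos : (0 : ℤ) < surjCount q.2 q.2 := by exact_mod_cast surjCount_self_pos
      exact (mul_eq_zero.mp hsum.symm).resolve_right hpos.ne'
    · exact fun x y hxy => congrArg _ hxy.surjCount_eq
    · intro x hx hxq
      obtain ⟨f, hf⟩ := exists_surjective_of_surjCount_ne_zero (Int.natCast_ne_zero.mp hx)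
      have hlt : Nat.card x.2 < n := hn ▸ (Nat.card_le_card_of_surjective f hf).lt_of_ne
        fun heq => hxq (RackIsomorphic.of_surjective_of_card_le f hf heq.ge).symm
      exact ih _ hlt x (hq.of_surjective f hf) rfl

theorem classWeight_univ_eq (lam : ι → ℤ) (i : ι)
    (hmax : ∀ j, lam j ≠ 0 → Nat.card (D j) ≤ Nat.card (D i))
    (hnoniso : ∀ j, j ≠ i → ¬ RackIsomorphic (D j) (D i)) :
    classWeight lam ⟨i, Subrack.univ (D i)⟩ = lam i := by
  classical
  rw [classWeight]
  refine Finset.sum_eq_single_of_mem (f := fun q : Σ i, Subrack (D i) => lam q.1)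
    ⟨i, Subrack.univ (D i)⟩ ?_ ?_
  · exact Finset.mem_filter.mpr ⟨Finset.mem_univ _, (subrackIsoSetoid D).iseqv.refl _⟩
  rintro ⟨j, T⟩ hT hne
  have hiso : RackIsomorphic T (D i) :=
    (Finset.mem_filter.mp hT).2.trans Subrack.rackIsomorphic_univ
  by_contra hj
  have hcard : Nat.card T = Nat.card (D j) :=
    (Nat.card_le_card_of_injective _ Subtype.val_injective).antisymm (hiso.card_eq ▸ hmax j hj)
  obtain rfl := Subrack.eq_univ_of_card_eq T hcard
  obtain rfl : j = i := by_contra fun hji =>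
    hnoniso j hji (Subrack.rackIsomorphic_univ.symm.trans hiso)
  exact hne rfl

end Marks

/-- The marks separate integral linear combinations of isomorphism classes of
finite connected racks: if `D₁, …, Dₙ` are pairwise non-isomorphic finite connected racks and
`∑ λᵢ |Mor(E, Dᵢ)| = 0` for every finite connected rack `E`, then all `λᵢ` vanish. -/
theorem marks_separate {n : ℕ} (D : Fin n → Type u) (instD : ∀ i, Rack (D i))
    (instF : ∀ i, Fintype (D i))
    (hconn : ∀ i, @IsConnectedRack (D i) (instD i))
    (hnoniso : ∀ i j, i ≠ j →
      ¬ @RackIsomorphic (D i) (D j) (instD i).toShelf (instD j).toShelf)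
    (lam : Fin n → ℤ)
    (h : ∀ (E : Type u) [Rack E] [Fintype E], IsConnectedRack E →
      (∑ i, lam i * (Nat.card (@ShelfHom E (D i) _ (instD i).toShelf) : ℤ)) = 0) :
    ∀ i, lam i = 0 := by
  by_contra! hne
  obtain ⟨i, hi, hmax⟩ := (Finset.univ.filter (lam · ≠ 0)).exists_max_image (Nat.card ∘ D)
    (by simpa [Finset.filter_nonempty_iff] using hne)
  have hzero := classWeight_eq_zero lam h ⟨i, Subrack.univ (D i)⟩
    (Subrack.rackIsomorphic_univ.symm.isConnectedRack (hconn i))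
  rw [classWeight_univ_eq lam i (fun j hj => hmax j (by simpa using hj))
    (fun j hji => hnoniso j i hji)] at hzero
  exact (Finset.mem_filter.mp hi).2 hzero
end

section
/- Let R be a finite rack decomposed into two disjoint nonempty subracks S and T. Then every maximal connected subrack of R is contained in S or in T, and the maximal connected subracks of R are precisely the maximal connected subracks of S together with the maximal connected subracks of T. -/
open Quandles

/-- A subset of a rack is a connected subrack if it is a subrack that is connected as a rack
with the induced structure. -/
def IsConnectedSubrack {R : Type*} [Rack R] (M : Set R) : Prop :=
  ∃ h : IsSubrack M, @IsConnectedRack ↥M (Subrack.rack M h)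

/-- `M` is a maximal connected subrack among the connected subracks contained in `U`. -/
def IsMaxConnWithin {R : Type*} [Rack R] (U M : Set R) : Prop :=
  M ⊆ U ∧ IsConnectedSubrack M ∧
    ∀ M' : Set R, IsConnectedSubrack M' → M' ⊆ U → M ⊆ M' → M = M'

/-!
A connected subrack `M` is a single orbit of `Inn M`, and `Inn M` is generated by left
multiplications by elements of `M`. In a decomposition `R = S ⊔ T` every left multiplication
`ℓ_a` preserves `S`: it maps `S` onto `S` if `a ∈ S`, and maps `T` onto `T`, hence `S` onto the
complement of `T`, if `a ∈ T`. So `Inn M` preserves `M ∩ S`, and connectedness forces `M ⊆ S` or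
`M ⊆ T`. Consequently the connected subracks of `R` are exactly those of `S` and of `T`, and since
a connected subrack of `S` cannot meet `T`, maximality in `S` (or `T`) is maximality in `R`.
-/

section

variable {R : Type*} [Rack R]

theorem IsSubrack.act_mem_iff {U : Set R} (hU : IsSubrack U) {a : R} (ha : a ∈ U) (b : R) :
    a ◃ b ∈ U ↔ b ∈ U := by
  rw [← Set.ext_iff.mp (hU a ha) (a ◃ b)]
  exact ⟨fun ⟨c, hc, hcb⟩ => (Rack.left_cancel a).mp hcb ▸ hc, fun hb => ⟨b, hb, rfl⟩⟩

theorem IsConnectedSubrack.nonempty {M : Set R} (hM : IsConnectedSubrack M) : M.Nonempty :=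
  let ⟨_, ⟨x⟩, _⟩ := hM
  ⟨x.1, x.2⟩

theorem IsSubrack.inn_apply_mem_iff {M : Set R} (hM : IsSubrack M) {S : Set R}
    (hS : ∀ a ∈ M, ∀ b, a ◃ b ∈ S ↔ b ∈ S) :
    ∀ g ∈ @Inn M (Subrack.rack M hM), ∀ x : M, (g x : R) ∈ S ↔ (x : R) ∈ S := by
  let := Subrack.rack M hM
  intro g hg
  induction hg using Subgroup.closure_induction with
  | mem g hg =>
    obtain ⟨a, rfl⟩ := hg
    exact fun x => hS a a.2 x
  | one => exact fun _ => Iff.rfl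
  | mul g h _ _ ihg ihh => exact fun x => (ihg (h x)).trans (ihh x)
  | inv g _ ihg =>
    intro x
    simpa only [Equiv.Perm.coe_inv, Equiv.apply_symm_apply] using (ihg (g⁻¹ x)).symm

theorem IsConnectedSubrack.subset_or_disjoint {M S : Set R} (hM : IsConnectedSubrack M)
    (hS : ∀ a ∈ M, ∀ b, a ◃ b ∈ S ↔ b ∈ S) : M ⊆ S ∨ Disjoint M S := by
  obtain ⟨hsub, -, htrans⟩ := hM
  rw [or_iff_not_imp_right, Set.not_disjoint_iff]
  rintro ⟨y, hyM, hyS⟩ x hxM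
  obtain ⟨g, hg, hgyx⟩ := htrans ⟨y, hyM⟩ ⟨x, hxM⟩
  have := (hsub.inn_apply_mem_iff hS g hg ⟨y, hyM⟩).mpr hyS
  rwa [hgyx] at this

namespace IsDecomposition

variable {S T : Set R}

theorem symm (hdec : IsDecomposition R S T) : IsDecomposition R T S :=
  ⟨hdec.subrack_right, hdec.subrack_left, hdec.nonempty_right, hdec.nonempty_left,
    hdec.disjoint.symm, Set.union_comm S T ▸ hdec.union⟩

theorem mem_right_iff (hdec : IsDecomposition R S T) (b : R) : b ∈ T ↔ b ∉ S := by
  have hb : b ∈ S ∨ b ∈ T := (Set.mem_union b S T).mp (hdec.union ▸ Set.mem_univ b)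
  have := @Set.disjoint_left.mp hdec.disjoint b
  tauto

theorem act_mem_left_iff (hdec : IsDecomposition R S T) (a b : R) : a ◃ b ∈ S ↔ b ∈ S := by
  by_cases ha : a ∈ S
  · exact hdec.subrack_left.act_mem_iff ha b
  · have hT := hdec.subrack_right.act_mem_iff ((hdec.mem_right_iff a).mpr ha) b
    rw [hdec.mem_right_iff, hdec.mem_right_iff] at hT
    exact not_iff_not.mp hT

theorem subset_or_subset_of_isConnectedSubrack (hdec : IsDecomposition R S T) {M : Set R}
    (hM : IsConnectedSubrack M) : M ⊆ S ∨ M ⊆ T :=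
  (hM.subset_or_disjoint fun a _ => hdec.act_mem_left_iff a).imp_right
    fun h x hx => (hdec.mem_right_iff x).mpr (Set.disjoint_left.mp h hx)

theorem isMaxConnWithin_univ_of_left (hdec : IsDecomposition R S T) {M : Set R}
    (hM : IsMaxConnWithin S M) : IsMaxConnWithin Set.univ M := by
  refine ⟨Set.subset_univ M, hM.2.1, fun M' hM' _ hMM' => ?_⟩
  refine hM.2.2 M' hM' ((hdec.subset_or_subset_of_isConnectedSubrack hM').resolve_right ?_) hMM'
  intro hM'T
  obtain ⟨x, hx⟩ := hM.2.1.nonempty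
  exact Set.disjoint_left.mp hdec.disjoint (hM.1 hx) (hM'T (hMM' hx))

end IsDecomposition

theorem IsMaxConnWithin.of_subset {U V M : Set R} (hM : IsMaxConnWithin V M) (hMU : M ⊆ U)
    (hUV : U ⊆ V) : IsMaxConnWithin U M :=
  ⟨hMU, hM.2.1, fun M' hM' hM'U => hM.2.2 M' hM' (hM'U.trans hUV)⟩

end

theorem max_connected_subracks_of_decomposition_general {R : Type*} [Rack R]
    {S T : Set R} (hdec : IsDecomposition R S T) :
    (∀ M : Set R, IsMaxConnWithin Set.univ M → M ⊆ S ∨ M ⊆ T) ∧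
    (∀ M : Set R, IsMaxConnWithin Set.univ M ↔
      (IsMaxConnWithin S M ∨ IsMaxConnWithin T M)) := by
  have subset_or_subset (M : Set R) (hM : IsMaxConnWithin Set.univ M) : M ⊆ S ∨ M ⊆ T :=
    hdec.subset_or_subset_of_isConnectedSubrack hM.2.1
  refine ⟨subset_or_subset, fun M => ⟨fun hM => ?_, ?_⟩⟩
  · exact (subset_or_subset M hM).imp (hM.of_subset · (Set.subset_univ S))
      (hM.of_subset · (Set.subset_univ T))
  · rintro (hM | hM)
    · exact hdec.isMaxConnWithin_univ_of_left hM
    · exact hdec.symm.isMaxConnWithin_univ_of_left hM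

/-- If a finite rack `R` is decomposed into disjoint nonempty subracks `S` and
`T`, then every maximal connected subrack of `R` is contained in `S` or in `T`, and the maximal
connected subracks of `R` are precisely those of `S` together with those of `T`. -/
theorem max_connected_subracks_of_decomposition {R : Type*} [Rack R] [Fintype R]
    {S T : Set R} (hdec : IsDecomposition R S T) :
    (∀ M : Set R, IsMaxConnWithin Set.univ M → M ⊆ S ∨ M ⊆ T) ∧
    (∀ M : Set R, IsMaxConnWithin Set.univ M ↔
      (IsMaxConnWithin S M ∨ IsMaxConnWithin T M)) :=
  max_connected_subracks_of_decomposition_general hdec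
end
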